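/- Let n ≥ 1, m ≥ 2, and work in the finite group ZMod n. Let (R_{ij})_{i≠j, i,j∈{1,…,m}} be independent random variables each uniformly distributed on ZMod n, and for inputs x = (x_1,…,x_m) ∈ (ZMod n)^m define S_i = x_i + Σ_{j≠i} R_{ji} − Σ_{j≠i} R_{ij}. Then the random vector (S_1,…,S_m) is uniformly distributed on the finite set { s ∈ (ZMod n)^m : s_1 + ⋯ + s_m = x_1 + ⋯ + x_m }. -/

import Mathlib

/-!
The joint vector of the `R p` is uniform on all of `{p // p.1 ≠ p.2} → ZMod n`, and `S` is its
image under the affine map `r ↦ x + netFlow r`, where `netFlow r i` is what party `i` receives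
minus what it sends. The push-forward of a uniform law under a map whose nonempty fibres all have
the same size is uniform on the range; for an affine map every nonempty fibre is a coset of the
kernel. Finally, the range of `netFlow` is exactly the set of zero-sum vectors: sending `t j` from
a fixed party `i₀` to every `j ≠ i₀` realizes any `t` with `∑ t = 0`.
-/

open MeasureTheory ProbabilityTheory

section NetFlow

variable {ι A : Type*} [Fintype ι] [DecidableEq ι] [AddCommGroup A]

def offDiagExtend (r : {p : ι × ι // p.1 ≠ p.2} → A) (i j : ι) : A :=
  if h : i ≠ j then r ⟨(i, j), h⟩ else 0

omit [Fintype ι] in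
lemma offDiagExtend_add (r r' : {p : ι × ι // p.1 ≠ p.2} → A) (i j : ι) :
    offDiagExtend (r + r') i j = offDiagExtend r i j + offDiagExtend r' i j := by
  unfold offDiagExtend
  split_ifs <;> simp

def netFlow : ({p : ι × ι // p.1 ≠ p.2} → A) →+ (ι → A) where
  toFun r i := ∑ j, offDiagExtend r j i - ∑ j, offDiagExtend r i j
  map_zero' := by ext; simp [offDiagExtend]
  map_add' r r' := by
    ext i
    simp only [offDiagExtend_add, Finset.sum_add_distrib, Pi.add_apply]
    abel

lemma netFlow_apply (r : {p : ι × ι // p.1 ≠ p.2} → A) (i : ι) :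
    netFlow r i = ∑ j, offDiagExtend r j i - ∑ j, offDiagExtend r i j :=
  rfl

lemma netFlow_apply_eq_sum_erase (r : {p : ι × ι // p.1 ≠ p.2} → A) (i : ι) :
    netFlow r i =
      ∑ j ∈ Finset.univ.erase i, (if h : j ≠ i then r ⟨(j, i), h⟩ else 0) -
        ∑ j ∈ Finset.univ.erase i, (if h : i ≠ j then r ⟨(i, j), h⟩ else 0) := by
  symm
  exact congrArg₂ (· - ·)
    (Finset.sum_erase (f := fun j => offDiagExtend r j i) _ (by simp [offDiagExtend]))
    (Finset.sum_erase (f := fun j => offDiagExtend r i j) _ (by simp [offDiagExtend]))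

lemma sum_netFlow (r : {p : ι × ι // p.1 ≠ p.2} → A) : ∑ i, netFlow r i = 0 := by
  rw [Finset.sum_congr rfl fun i _ => netFlow_apply r i, Finset.sum_sub_distrib,
    Finset.sum_comm, sub_self]

lemma netFlow_of_sum_eq_zero (i₀ : ι) {t : ι → A} (ht : ∑ i, t i = 0) :
    netFlow (fun p => if p.1.1 = i₀ then t p.1.2 else 0) = t := by
  ext i
  rw [netFlow_apply, Fintype.sum_eq_single i₀ fun j hj => by simp [offDiagExtend, hj]]
  rcases eq_or_ne i i₀ with rfl | hi
  · simp [offDiagExtend, Finset.sum_ite, Finset.filter_ne, Finset.sum_erase_eq_sub, ht]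
  · simp [offDiagExtend, hi, Ne.symm hi]

lemma mem_range_netFlow_iff [Nonempty ι] {t : ι → A} :
    t ∈ (netFlow : ({p : ι × ι // p.1 ≠ p.2} → A) →+ (ι → A)).range ↔ ∑ i, t i = 0 :=
  ⟨fun ⟨r, hr⟩ => hr ▸ sum_netFlow r,
    fun ht => ⟨_, netFlow_of_sum_eq_zero (Classical.arbitrary ι) ht⟩⟩

lemma range_const_add_netFlow [Nonempty ι] (c : ι → A) :
    Set.range (fun r : {p : ι × ι // p.1 ≠ p.2} → A => c + netFlow r) =
      {s | ∑ i, s i = ∑ i, c i} := by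
  ext s
  have hshift : (∃ r, c + netFlow r = s) ↔
      s - c ∈ (netFlow : ({p : ι × ι // p.1 ≠ p.2} → A) →+ (ι → A)).range := by
    simp only [AddMonoidHom.mem_range, eq_sub_iff_add_eq']
  rw [Set.mem_range, hshift, mem_range_netFlow_iff, Set.mem_ofPred_eq]
  simp only [Pi.sub_apply, Finset.sum_sub_distrib, sub_eq_zero]

end NetFlow

section UniformPushforward

variable {β : Type*} [MeasurableSpace β] [MeasurableSingletonClass β] [Countable β]

theorem eq_uniformOn_of_measure_singleton_eq {ν : Measure β} [IsProbabilityMeasure ν]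
    {C : Set β} (hC : C.Finite) (hsupp : ν Cᶜ = 0)
    (hconst : ∀ b ∈ C, ∀ b' ∈ C, ν {b} = ν {b'}) : ν = uniformOn C := by
  refine Measure.ext_of_singleton fun b => ?_
  by_cases hb : b ∈ C
  · have hνC : ν C = 1 := (prob_compl_eq_zero_iff hC.measurableSet).1 hsupp
    have hsum : ν C = ν {b} * Measure.count C := by
      rw [← hC.coe_toFinset, ← sum_measure_singleton, Measure.count_apply_finset,
        Finset.sum_congr rfl fun b' hb' => hconst b' (hC.mem_toFinset.1 hb') b hb,
        Finset.sum_const, nsmul_eq_mul, mul_comm]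
    rw [uniformOn, cond_apply hC.measurableSet, Set.inter_singleton_of_mem hb,
      Measure.count_singleton, mul_one]
    exact ENNReal.eq_inv_of_mul_eq_one_left (hsum ▸ hνC)
  · rw [measure_mono_null (Set.singleton_subset_iff.2 hb) hsupp, eq_comm,
      uniformOn_eq_zero_iff hC, Set.inter_singleton_eq_empty.2 hb]

variable {α : Type*} [MeasurableSpace α] [DiscreteMeasurableSpace α] [Fintype α] [Nonempty α]

theorem map_uniformOn_univ_of_encard_fiber_eq {f : α → β}
    (hf : ∀ a a', (f ⁻¹' {f a}).encard = (f ⁻¹' {f a'}).encard) :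
    (uniformOn Set.univ : Measure α).map f = uniformOn (Set.range f) := by
  have hmeas : Measurable f := .of_discrete
  have := Measure.isProbabilityMeasure_map (μ := (uniformOn Set.univ : Measure α))
    hmeas.aemeasurable
  refine eq_uniformOn_of_measure_singleton_eq (Set.finite_range f) ?_ ?_
  · rw [Measure.map_apply hmeas .of_discrete, Set.preimage_compl, Set.preimage_range,
      Set.compl_univ, measure_empty]
  · rintro _ ⟨a, rfl⟩ _ ⟨a', rfl⟩
    rw [Measure.map_apply hmeas (.singleton _), Measure.map_apply hmeas (.singleton _),
      uniformOn_univ, uniformOn_univ, Measure.count_apply .of_discrete,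
      Measure.count_apply .of_discrete, hf]

end UniformPushforward

theorem AddMonoidHom.encard_fiber_const_add_eq {G H : Type*} [AddGroup G] [AddGroup H]
    (φ : G →+ H) (c : H) (a a' : G) :
    ((fun g => c + φ g) ⁻¹' {c + φ a}).encard = ((fun g => c + φ g) ⁻¹' {c + φ a'}).encard := by
  simp only [Set.preimage, Set.mem_singleton_iff, add_right_inj]
  exact Set.encard_congr (φ.fiberEquiv a a')

theorem map_pi_eq_uniformOn_univ_of_iIndepFun {ι α Ω : Type*} [Fintype ι] [Finite α]
    [MeasurableSpace α] [MeasurableSingletonClass α] [MeasurableSpace Ω] {μ : Measure Ω}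
    [IsProbabilityMeasure μ] {X : ι → Ω → α} (hX : ∀ i, Measurable (X i))
    (hindep : iIndepFun X μ) (hunif : ∀ i, μ.map (X i) = uniformOn Set.univ) :
    μ.map (fun ω i => X i ω) = uniformOn Set.univ := by
  rw [(iIndepFun_iff_map_fun_eq_pi_map fun i => (hX i).aemeasurable).1 hindep, funext hunif,
    ← uniformOn_pi, Set.pi_univ]

/-- **Finite-field Secure-Sum: the revealed vector is uniform on the correct-sum set.**
Let `n ≥ 1`, `m ≥ 2`, and let `(R i j)` (for ordered pairs `i ≠ j` in `{1, …, m}`) be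
independent random variables, each uniform on `ZMod n`.  Party `i` reveals
`S i = x i + ∑_{j≠i} R j i - ∑_{j≠i} R i j`.  Then `(S 1, …, S m)` is uniformly distributed
on the finite set of tuples `s` with `s 1 + ⋯ + s m = x 1 + ⋯ + x m`. -/
theorem secure_sum_zmod_uniform (n m : ℕ) (hn : 1 ≤ n) (hm : 2 ≤ m)
    {Ω : Type*} [MeasurableSpace Ω] (μ : Measure Ω) [IsProbabilityMeasure μ]
    (R : {p : Fin m × Fin m // p.1 ≠ p.2} → Ω → ZMod n)
    (hmeas : ∀ p, Measurable (R p))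
    (hindep : iIndepFun R μ)
    (hunif : ∀ p, Measure.map (R p) μ = uniformOn (Set.univ : Set (ZMod n)))
    (x : Fin m → ZMod n)
    (S : Ω → Fin m → ZMod n)
    (hS : ∀ ω i, S ω i = x i +
      (∑ j ∈ Finset.univ.erase i, (if h : j ≠ i then R ⟨(j, i), h⟩ ω else 0)) -
      ∑ j ∈ Finset.univ.erase i, (if h : i ≠ j then R ⟨(i, j), h⟩ ω else 0)) :
    Measure.map S μ = uniformOn {s : Fin m → ZMod n | ∑ i, s i = ∑ i, x i} := by
  have : NeZero n := ⟨by omega⟩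
  have : Nonempty (Fin m) := ⟨⟨0, by omega⟩⟩
  have hS_comp : S = (fun r => x + netFlow r) ∘ fun ω p => R p ω := by
    funext ω i
    rw [hS, Function.comp_apply, Pi.add_apply, netFlow_apply_eq_sum_erase, add_sub_assoc]
  rw [hS_comp, ← Measure.map_map .of_discrete (measurable_pi_lambda _ hmeas),
    map_pi_eq_uniformOn_univ_of_iIndepFun hmeas hindep hunif,
    map_uniformOn_univ_of_encard_fiber_eq (netFlow.encard_fiber_const_add_eq x),
    range_const_add_netFlow]
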